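/- arXiv:2412.21114 — 10 statements merged into one kernel-verified Lean document; each statement's English description precedes it below -/
import Mathlib

section
/- Define x(ξ,η) = ξ + η, y(ξ,η) = ξ·η, and μ(ξ,η) = log(η − ξ) on the domain {(ξ,η) ∈ ℝ² : η > ξ}. Then x, y, μ satisfy the twistor compatibility system at every point of this domain, i.e. x_{ξη} = μ_ξ·x_η + μ_η·x_ξ and y_{ξη} = μ_ξ·y_η + μ_η·y_ξ. -/
/-! Since `μ_ξ = -μ_η = (ξ - η)⁻¹`, the right-hand side of the system for any `f` is
`(f_ξ - f_η) / (η - ξ)`. This vanishes for `x = ξ + η`, whose mixed derivative is `0`, and equals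
`1` for `y = ξη`, whose mixed derivative is `1`. -/

lemma deriv_log_const_sub {a t : ℝ} (h : t ≠ a) :
    deriv (fun s => Real.log (a - s)) t = (t - a)⁻¹ := by
  have hne : a - t ≠ 0 := sub_ne_zero.mpr h.symm
  rw [deriv.log (f := (a - ·)) (by fun_prop) hne, deriv_const_sub, deriv_id'']
  field_simp
  ring

lemma deriv_log_sub_const {a t : ℝ} (h : t ≠ a) :
    deriv (fun s => Real.log (s - a)) t = (t - a)⁻¹ := by
  rw [deriv.log (f := (· - a)) (by fun_prop) (sub_ne_zero.mpr h), deriv_sub_const, deriv_id'',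
    one_div]

lemma deriv_log_sub_mul_add_deriv_log_sub_mul {ξ η : ℝ} (h : ξ < η) (a b : ℝ) :
    deriv (fun t => Real.log (η - t)) ξ * a + deriv (fun s => Real.log (s - ξ)) η * b
      = (b - a) / (η - ξ) := by
  rw [deriv_log_const_sub h.ne, deriv_log_sub_const h.ne', ← neg_sub η ξ, inv_neg]
  ring

/-- the orthotoric data `x = ξ + η`, `y = ξη`, `μ = log (η − ξ)`
satisfies the twistor compatibility system on `{η > ξ}`. -/
theorem stmt_3 (x y μ : ℝ → ℝ → ℝ)
    (hx : x = fun ξ η => ξ + η)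
    (hy : y = fun ξ η => ξ * η)
    (hμ : μ = fun ξ η => Real.log (η - ξ)) :
    ∀ ξ η : ℝ, ξ < η →
      (deriv (fun s => deriv (fun t => x t s) ξ) η
          = deriv (fun t => μ t η) ξ * deriv (fun s => x ξ s) η
            + deriv (fun s => μ ξ s) η * deriv (fun t => x t η) ξ) ∧
      (deriv (fun s => deriv (fun t => y t s) ξ) η
          = deriv (fun t => μ t η) ξ * deriv (fun s => y ξ s) η
            + deriv (fun s => μ ξ s) η * deriv (fun t => y t η) ξ) := by
  subst hx hy hμ
  intro ξ η h
  simp only [deriv_log_sub_mul_add_deriv_log_sub_mul h]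
  have hne : η - ξ ≠ 0 := sub_ne_zero.mpr h.ne'
  constructor
  · simp
  · simp [hne]
end

section
/- Define x(ξ,η) = 1/(η − ξ), y(ξ,η) = η/(η − ξ), and μ(ξ,η) = −log(η − ξ) on the domain {(ξ,η) ∈ ℝ² : η > ξ}. Then x, y, μ satisfy the twistor compatibility system at every point of this domain, i.e. x_{ξη} = μ_ξ·x_η + μ_η·x_ξ and y_{ξη} = μ_ξ·y_η + μ_η·y_ξ. -/
/-!
Both `x` and `y` have the form `f = g(η) / (η - ξ)`, with `g = 1` and `g = id`. For any such `f`
and `μ = -log (η - ξ)` one has `μ_ξ = -μ_η = 1 / (η - ξ)`, so the right-hand side of the system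
is `(f_η - f_ξ) / (η - ξ)`. Since `f_ξ = g / (η - ξ)²` and `f_η = (g' (η - ξ) - g) / (η - ξ)²`,
this is `(g' (η - ξ) - 2 g) / (η - ξ)³`, which is exactly the `η`-derivative of `f_ξ`.
-/

open Real Filter Topology

def TwistorCompatibleAt (μ f : ℝ → ℝ → ℝ) (ξ η : ℝ) : Prop :=
  deriv (fun s => deriv (fun t => f t s) ξ) η
    = deriv (fun t => μ t η) ξ * deriv (fun s => f ξ s) η
      + deriv (fun s => μ ξ s) η * deriv (fun t => f t η) ξ

lemma deriv_div_sub_left (a : ℝ) {s ξ : ℝ} (h : s ≠ ξ) :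
    deriv (fun t => a / (s - t)) ξ = a / (s - ξ) ^ 2 := by
  have H : HasDerivAt (fun t => a * (s - t)⁻¹) (a * (-(-1) / (s - ξ) ^ 2)) ξ :=
    (((hasDerivAt_id' ξ).const_sub s).inv (sub_ne_zero.2 h)).const_mul a
  simp only [div_eq_mul_inv] at H ⊢
  rw [H.deriv]
  ring

lemma hasDerivAt_div_sub_right {g : ℝ → ℝ} {g' ξ η : ℝ} (hg : HasDerivAt g g' η)
    (h : η ≠ ξ) :
    HasDerivAt (fun s => g s / (s - ξ)) ((g' * (η - ξ) - g η) / (η - ξ) ^ 2) η := by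
  have H := hg.fun_div ((hasDerivAt_id' η).sub_const ξ) (sub_ne_zero.2 h)
  rwa [mul_one] at H

lemma hasDerivAt_deriv_div_sub {g : ℝ → ℝ} {g' ξ η : ℝ} (hg : HasDerivAt g g' η)
    (h : η ≠ ξ) :
    HasDerivAt (fun s => deriv (fun t => g s / (s - t)) ξ)
      ((g' * (η - ξ) - 2 * g η) / (η - ξ) ^ 3) η := by
  have hne : η - ξ ≠ 0 := sub_ne_zero.2 h
  have hinner :
      (fun s => g s / (s - ξ) ^ 2) =ᶠ[𝓝 η] fun s => deriv (fun t => g s / (s - t)) ξ := by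
    filter_upwards [eventually_ne_nhds h] with s hs
    exact (deriv_div_sub_left (g s) hs).symm
  have hsq : HasDerivAt (fun s => (s - ξ) ^ 2) (2 * (η - ξ)) η := by
    simpa using ((hasDerivAt_id' η).sub_const ξ).fun_pow 2
  have H := hg.fun_div hsq (pow_ne_zero 2 hne)
  refine (H.congr_of_eventuallyEq hinner.symm).congr_deriv ?_
  field_simp

lemma deriv_neg_log_sub_left {ξ η : ℝ} (h : η ≠ ξ) :
    deriv (fun t => -log (η - t)) ξ = 1 / (η - ξ) := by
  have H : HasDerivAt (fun t => -log (η - t)) (-(-1 / (η - ξ))) ξ :=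
    (((hasDerivAt_id' ξ).const_sub η).log (sub_ne_zero.2 h)).neg
  rw [H.deriv]
  ring

lemma deriv_neg_log_sub_right {ξ η : ℝ} (h : η ≠ ξ) :
    deriv (fun s => -log (s - ξ)) η = -(1 / (η - ξ)) := by
  simpa using (((hasDerivAt_id' η).sub_const ξ).log (sub_ne_zero.2 h)).neg.deriv

theorem twistorCompatibleAt_div_sub {g : ℝ → ℝ} {g' ξ η : ℝ} (hg : HasDerivAt g g' η)
    (h : η ≠ ξ) :
    TwistorCompatibleAt (fun t s => -log (s - t)) (fun t s => g s / (s - t)) ξ η := by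
  unfold TwistorCompatibleAt
  rw [(hasDerivAt_deriv_div_sub hg h).deriv, deriv_neg_log_sub_left h,
    deriv_neg_log_sub_right h, (hasDerivAt_div_sub_right hg h).deriv, deriv_div_sub_left _ h]
  field_simp
  ring

/-- the conformally orthotoric (parabolic) data `x = 1/(η − ξ)`,
`y = η/(η − ξ)`, `μ = −log (η − ξ)` satisfies the twistor compatibility system
on `{η > ξ}`. -/
theorem stmt_4 (x y μ : ℝ → ℝ → ℝ)
    (hx : x = fun ξ η => 1 / (η - ξ))
    (hy : y = fun ξ η => η / (η - ξ))
    (hμ : μ = fun ξ η => -Real.log (η - ξ)) :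
    ∀ ξ η : ℝ, ξ < η →
      (deriv (fun s => deriv (fun t => x t s) ξ) η
          = deriv (fun t => μ t η) ξ * deriv (fun s => x ξ s) η
            + deriv (fun s => μ ξ s) η * deriv (fun t => x t η) ξ) ∧
      (deriv (fun s => deriv (fun t => y t s) ξ) η
          = deriv (fun t => μ t η) ξ * deriv (fun s => y ξ s) η
            + deriv (fun s => μ ξ s) η * deriv (fun t => y t η) ξ) := by
  subst hx hy hμ
  intro ξ η hξη
  exact ⟨twistorCompatibleAt_div_sub (hasDerivAt_const η 1) hξη.ne',
    twistorCompatibleAt_div_sub (hasDerivAt_id' η) hξη.ne'⟩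
end

section
/- Define x(ξ,η) = 1/(η − ξ), y(ξ,η) = ξ·η/(η − ξ), and μ(ξ,η) = log((η + ξ)/(η − ξ)) on the domain {(ξ,η) ∈ ℝ² : η > ξ and η + ξ > 0}. Then x, y, μ satisfy the twistor compatibility system at every point of this domain, i.e. x_{ξη} = μ_ξ·x_η + μ_η·x_ξ and y_{ξη} = μ_ξ·y_η + μ_η·y_ξ. -/
lemma hdx (s b : ℝ) (h : s ≠ b) : HasDerivAt (fun t : ℝ => 1/(s - t)) (1/(s-b)^2) b := by
  have h1 : HasDerivAt (fun t : ℝ => s - t) (-1) b := (hasDerivAt_id b).const_sub s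
  have := h1.inv (sub_ne_zero.mpr h)
  simpa [Pi.inv_def] using this

lemma hdy (s b : ℝ) (h : s ≠ b) : HasDerivAt (fun t : ℝ => t * s / (s - t)) (s^2/(s-b)^2) b := by
  have h1 : HasDerivAt (fun t : ℝ => t * s) s b := by
    simpa using (hasDerivAt_id b).mul_const s
  have h2 : HasDerivAt (fun t : ℝ => (s - t)⁻¹) (1/(s-b)^2) b := by
    simpa [one_div] using hdx s b h
  have h3 := h1.mul h2
  have hfe : (fun t : ℝ => t * s / (s - t)) = fun t => t * s * (s - t)⁻¹ := by
    funext t; rw [div_eq_mul_inv]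
  rw [hfe]
  have hne : s - b ≠ 0 := sub_ne_zero.mpr h
  refine h3.congr_deriv ?_
  field_simp
  ring

-- outer derivative of x: d/ds 1/(s-ξ)^2 = -2/(η-ξ)^3
lemma hdxo (b η : ℝ) (h : b ≠ η) : HasDerivAt (fun s : ℝ => 1/(s - b)^2) (-2/(η-b)^3) η := by
  have hne : η - b ≠ 0 := sub_ne_zero.mpr h.symm
  have h1 : HasDerivAt (fun s : ℝ => (s - b)^2) (2*(η - b)) η := by
    have := ((hasDerivAt_id η).sub_const b).pow 2
    simpa [Pi.pow_def] using this
  have h2 := h1.inv (pow_ne_zero 2 hne)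
  have hfe : (fun s : ℝ => 1/(s - b)^2) = fun s => ((s - b)^2)⁻¹ := by
    funext s; rw [one_div]
  rw [hfe]
  refine h2.congr_deriv ?_
  field_simp

-- outer derivative of y: d/ds s^2/(s-ξ)^2 = -2ξη/(η-ξ)^3
lemma hdyo (b η : ℝ) (h : b ≠ η) :
    HasDerivAt (fun s : ℝ => s^2/(s - b)^2) (-2*b*η/(η-b)^3) η := by
  have hne : η - b ≠ 0 := sub_ne_zero.mpr h.symm
  have h1 : HasDerivAt (fun s : ℝ => s^2) (2*η) η := by
    simpa using hasDerivAt_pow 2 η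
  have h2 : HasDerivAt (fun s : ℝ => ((s - b)^2)⁻¹) (-(2*(η-b))/((η-b)^2)^2) η := by
    have h3 : HasDerivAt (fun s : ℝ => (s - b)^2) (2*(η - b)) η := by
      simpa [Pi.pow_def] using ((hasDerivAt_id η).sub_const b).pow 2
    exact h3.inv (pow_ne_zero 2 hne)
  have h4 := h1.mul h2
  have hfe : (fun s : ℝ => s^2/(s - b)^2) = fun s => s^2 * ((s - b)^2)⁻¹ := by
    funext s; rw [div_eq_mul_inv]
  rw [hfe]
  refine h4.congr_deriv ?_
  field_simp
  ring

-- μ_ξ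
lemma hdmu1 (ξ η : ℝ) (h1 : ξ < η) (h2 : 0 < η + ξ) :
    HasDerivAt (fun t : ℝ => Real.log ((η + t)/(η - t))) (2*η/((η+ξ)*(η-ξ))) ξ := by
  have hd : (0:ℝ) < η - ξ := by linarith
  have hu1 : HasDerivAt (fun t : ℝ => η + t) 1 ξ := by
    simpa using (hasDerivAt_id ξ).const_add η
  have hu2 : HasDerivAt (fun t : ℝ => (η - t)⁻¹) (1/(η-ξ)^2) ξ := by
    simpa [one_div] using hdx η ξ (ne_of_gt h1)
  have hu := hu1.mul hu2
  have hne : (η + ξ) * (η - ξ)⁻¹ ≠ 0 := by positivity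
  have hlog := hu.log hne
  have hfe : (fun t : ℝ => Real.log ((η + t)/(η - t)))
      = fun t => Real.log ((η + t) * (η - t)⁻¹) := by
    funext t; rw [div_eq_mul_inv]
  rw [hfe]
  refine hlog.congr_deriv ?_
  simp only [Pi.mul_apply]
  field_simp
  ring

-- μ_η
lemma hdmu2 (ξ η : ℝ) (h1 : ξ < η) (h2 : 0 < η + ξ) :
    HasDerivAt (fun s : ℝ => Real.log ((s + ξ)/(s - ξ))) (-2*ξ/((η+ξ)*(η-ξ))) η := by
  have hd : (0:ℝ) < η - ξ := by linarith
  have hu1 : HasDerivAt (fun s : ℝ => s + ξ) 1 η := by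
    simpa using (hasDerivAt_id η).add_const ξ
  have hu2 : HasDerivAt (fun s : ℝ => (s - ξ)⁻¹) (-(1/(η-ξ)^2)) η := by
    have h3 : HasDerivAt (fun s : ℝ => s - ξ) 1 η := (hasDerivAt_id η).sub_const ξ
    have := h3.inv (ne_of_gt hd)
    refine this.congr_deriv ?_
    field_simp
  have hu := hu1.mul hu2
  have hne : (η + ξ) * (η - ξ)⁻¹ ≠ 0 := by positivity
  have hlog := hu.log hne
  have hfe : (fun s : ℝ => Real.log ((s + ξ)/(s - ξ)))
      = fun s => Real.log ((s + ξ) * (s - ξ)⁻¹) := by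
    funext s; rw [div_eq_mul_inv]
  rw [hfe]
  refine hlog.congr_deriv ?_
  simp only [Pi.mul_apply]
  field_simp
  ring

/-- the hyperbolic data `x = 1/(η − ξ)`, `y = ξη/(η − ξ)`,
`μ = log ((η + ξ)/(η − ξ))` satisfies the twistor compatibility system on
`{η > ξ, η + ξ > 0}`. -/
theorem stmt_6 (x y μ : ℝ → ℝ → ℝ)
    (hx : x = fun ξ η => 1 / (η - ξ))
    (hy : y = fun ξ η => ξ * η / (η - ξ))
    (hμ : μ = fun ξ η => Real.log ((η + ξ) / (η - ξ))) :
    ∀ ξ η : ℝ, ξ < η → 0 < η + ξ →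
      (deriv (fun s => deriv (fun t => x t s) ξ) η
          = deriv (fun t => μ t η) ξ * deriv (fun s => x ξ s) η
            + deriv (fun s => μ ξ s) η * deriv (fun t => x t η) ξ) ∧
      (deriv (fun s => deriv (fun t => y t s) ξ) η
          = deriv (fun t => μ t η) ξ * deriv (fun s => y ξ s) η
            + deriv (fun s => μ ξ s) η * deriv (fun t => y t η) ξ) := by
  intro ξ η hlt hpos
  subst hx hy hμ
  simp only []
  have hd : (0:ℝ) < η - ξ := by linarith
  have hne : η - ξ ≠ 0 := ne_of_gt hd
  have hp : η + ξ ≠ 0 := ne_of_gt hpos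
  have hev : ∀ᶠ s in nhds η, ξ < s := eventually_gt_nhds hlt
  -- outer derivs via eventual equality
  have hx1 : (fun s => deriv (fun t => 1/(s - t)) ξ) =ᶠ[nhds η] (fun s => 1/(s-ξ)^2) := by
    filter_upwards [hev] with s hs
    exact (hdx s ξ (ne_of_gt hs)).deriv
  have hy1 : (fun s => deriv (fun t => t * s/(s - t)) ξ) =ᶠ[nhds η] (fun s => s^2/(s-ξ)^2) := by
    filter_upwards [hev] with s hs
    exact (hdy s ξ (ne_of_gt hs)).deriv
  have e1 : deriv (fun s => deriv (fun t => 1/(s - t)) ξ) η = -2/(η-ξ)^3 := by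
    rw [hx1.deriv_eq]; exact (hdxo ξ η (ne_of_lt hlt)).deriv
  have e2 : deriv (fun s => deriv (fun t => t * s/(s - t)) ξ) η = -2*ξ*η/(η-ξ)^3 := by
    rw [hy1.deriv_eq]; exact (hdyo ξ η (ne_of_lt hlt)).deriv
  have e3 : deriv (fun t => Real.log ((η + t)/(η - t))) ξ = 2*η/((η+ξ)*(η-ξ)) :=
    (hdmu1 ξ η hlt hpos).deriv
  have e4 : deriv (fun s => Real.log ((s + ξ)/(s - ξ))) η = -2*ξ/((η+ξ)*(η-ξ)) :=
    (hdmu2 ξ η hlt hpos).deriv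
  have e5 : deriv (fun s => (1:ℝ)/(s - ξ)) η = -(1/(η-ξ)^2) := by
    have h3 : HasDerivAt (fun s : ℝ => s - ξ) 1 η := (hasDerivAt_id η).sub_const ξ
    have := h3.inv hne
    have h4 : HasDerivAt (fun s : ℝ => 1/(s - ξ)) (-(1/(η-ξ)^2)) η := by
      have hfe : (fun s : ℝ => 1/(s - ξ)) = fun s => (s - ξ)⁻¹ := by
        funext s; rw [one_div]
      rw [hfe]
      refine this.congr_deriv ?_; field_simp
    exact h4.deriv
  have e6 : deriv (fun t => (1:ℝ)/(η - t)) ξ = 1/(η-ξ)^2 := (hdx η ξ (ne_of_gt hlt)).deriv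
  have e7 : deriv (fun s => ξ * s/(s - ξ)) η = -(ξ^2)/(η-ξ)^2 := by
    have h1 : HasDerivAt (fun s : ℝ => ξ * s) ξ η := by
      simpa using (hasDerivAt_id η).const_mul ξ
    have h2 : HasDerivAt (fun s : ℝ => (s - ξ)⁻¹) (-(1/(η-ξ)^2)) η := by
      have h3 : HasDerivAt (fun s : ℝ => s - ξ) 1 η := (hasDerivAt_id η).sub_const ξ
      have := h3.inv hne
      refine this.congr_deriv ?_; field_simp
    have h4 := h1.mul h2
    have hfe : (fun s : ℝ => ξ * s/(s - ξ)) = fun s => ξ * s * (s - ξ)⁻¹ := by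
      funext s; rw [div_eq_mul_inv]
    rw [hfe]
    have h5 : HasDerivAt (fun s : ℝ => ξ * s * (s - ξ)⁻¹) (-(ξ^2)/(η-ξ)^2) η := by
      refine h4.congr_deriv ?_
      field_simp
      ring
    exact h5.deriv
  have e8 : deriv (fun t => t * η/(η - t)) ξ = η^2/(η-ξ)^2 := (hdy η ξ (ne_of_gt hlt)).deriv
  constructor
  · rw [e1, e3, e4, e5, e6]
    field_simp
    ring
  · rw [e2, e3, e4, e7, e8]
    field_simp
    ring
end

section
/- Let α ∈ ℝ, and define x(ξ,η) = (√(ξ² + α) + √(η² + α))/(η − ξ), y(ξ,η) = (η·√(ξ² + α) + ξ·√(η² + α))/(η − ξ), and μ(ξ,η) = log((√(ξ² + α)·√(η² + α) + ξη + α)/(η − ξ)) on the domain {(ξ,η) ∈ ℝ² : η > ξ, ξ² + α > 0, η² + α > 0, and √(ξ² + α)·√(η² + α) + ξη + α > 0}. Then x, y, μ satisfy the twistor compatibility system at every point of this domain, i.e. x_{ξη} = μ_ξ·x_η + μ_η·x_ξ and y_{ξη} = μ_ξ·y_η + μ_η·y_ξ. -/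
/-!
Write `a = √(ξ² + α)`, `b = √(η² + α)` and `N = ab + ξη + α`. Everything rests on the identity
`(a - b) N = (η a + ξ b)(ξ - η)`, which only uses `a² - ξ² = b² - η² = α`. It gives
`μ_ξ = b / (a (η - ξ))`, and, for `z = p x + q y`, `z_ξ = (p + qη) N / (a (η - ξ)²)` and
`z_ξη = -N z / (ab (η - ξ)²)`. As `μ` is symmetric and `z` antisymmetric in `(ξ, η)`, the
`η`-derivatives are `ξ`-derivatives with the arguments swapped, and the system becomes an identity
between rational functions of `ξ, η, a, b`.
-/

open Real Topology

/-- `x` is `twistorCoord α 1 0` and `y` is `twistorCoord α 0 1`. -/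
noncomputable def twistorCoord (α p q t s : ℝ) : ℝ :=
  ((p + q * s) * √(t ^ 2 + α) + (p + q * t) * √(s ^ 2 + α)) / (s - t)

noncomputable def twistorPotential (α t s : ℝ) : ℝ :=
  log ((√(t ^ 2 + α) * √(s ^ 2 + α) + t * s + α) / (s - t))

section
variable {α t s : ℝ}

theorem hasDerivAt_sqrt_sq_add (ht : 0 < t ^ 2 + α) :
    HasDerivAt (fun u => √(u ^ 2 + α)) (t / √(t ^ 2 + α)) t := by
  convert ((hasDerivAt_pow 2 t).add_const α).sqrt ht.ne' using 1
  field_simp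
  ring

theorem sqrt_sub_sqrt_mul_eq (ht : 0 ≤ t ^ 2 + α) (hs : 0 ≤ s ^ 2 + α) :
    (√(t ^ 2 + α) - √(s ^ 2 + α)) * (√(t ^ 2 + α) * √(s ^ 2 + α) + t * s + α)
      = (s * √(t ^ 2 + α) + t * √(s ^ 2 + α)) * (t - s) := by
  linear_combination √(s ^ 2 + α) * sq_sqrt ht - √(t ^ 2 + α) * sq_sqrt hs

theorem twistorPotential_comm (α t s : ℝ) : twistorPotential α s t = twistorPotential α t s := by
  rw [twistorPotential, twistorPotential, ← neg_sub t s, div_neg, log_neg_eq_log]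
  ring_nf

theorem twistorCoord_swap (α p q t s : ℝ) :
    twistorCoord α p q s t = -twistorCoord α p q t s := by
  rw [twistorCoord, twistorCoord, ← neg_sub s t, div_neg]
  ring_nf

theorem hasDerivAt_twistorPotential_left (ht : 0 < t ^ 2 + α) (hs : 0 ≤ s ^ 2 + α) (hts : t ≠ s)
    (hN : √(t ^ 2 + α) * √(s ^ 2 + α) + t * s + α ≠ 0) :
    HasDerivAt (fun u => twistorPotential α u s) (√(s ^ 2 + α) / (√(t ^ 2 + α) * (s - t))) t := by
  have hst : s - t ≠ 0 := sub_ne_zero.2 hts.symm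
  have hnum : HasDerivAt (fun u => √(u ^ 2 + α) * √(s ^ 2 + α) + u * s + α)
      (t / √(t ^ 2 + α) * √(s ^ 2 + α) + 1 * s) t :=
    (((hasDerivAt_sqrt_sq_add ht).mul_const _).add ((hasDerivAt_id t).mul_const s)).add_const α
  refine ((hnum.div ((hasDerivAt_id' t).const_sub s) hst).log
    (div_ne_zero hN hst)).congr_deriv ?_
  simp only [Pi.div_apply]
  have ha : 0 < √(t ^ 2 + α) := sqrt_pos.2 ht
  field_simp
  linear_combination sqrt_sub_sqrt_mul_eq ht.le hs

theorem hasDerivAt_twistorCoord_left (p q : ℝ) (ht : 0 < t ^ 2 + α) (hts : t ≠ s) :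
    HasDerivAt (fun u => twistorCoord α p q u s)
      ((p + q * s) * (√(t ^ 2 + α) * √(s ^ 2 + α) + t * s + α)
        / (√(t ^ 2 + α) * (s - t) ^ 2)) t := by
  have hst : s - t ≠ 0 := sub_ne_zero.2 hts.symm
  have hnum : HasDerivAt (fun u => (p + q * s) * √(u ^ 2 + α) + (p + q * u) * √(s ^ 2 + α))
      ((p + q * s) * (t / √(t ^ 2 + α)) + q * 1 * √(s ^ 2 + α)) t :=
    ((hasDerivAt_sqrt_sq_add ht).const_mul _).add
      ((((hasDerivAt_id t).const_mul q).const_add p).mul_const _)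
  refine (hnum.div ((hasDerivAt_id' t).const_sub s) hst).congr_deriv ?_
  have ha : 0 < √(t ^ 2 + α) := sqrt_pos.2 ht
  field_simp
  linear_combination (p + q * s) * sq_sqrt ht.le

theorem hasDerivAt_deriv_twistorCoord_left (p q : ℝ) (ht : 0 < t ^ 2 + α) (hs : 0 < s ^ 2 + α)
    (hts : t ≠ s) :
    HasDerivAt (fun v => deriv (fun u => twistorCoord α p q u v) t)
      (-((√(t ^ 2 + α) * √(s ^ 2 + α) + t * s + α) * twistorCoord α p q t s)
        / (√(t ^ 2 + α) * √(s ^ 2 + α) * (s - t) ^ 2)) s := by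
  set a := √(t ^ 2 + α)
  have heq : (fun v => deriv (fun u => twistorCoord α p q u v) t) =ᶠ[𝓝 s]
      fun v => (p + q * v) * (a * √(v ^ 2 + α) + t * v + α) / (a * (v - t) ^ 2) := by
    filter_upwards [eventually_ne_nhds hts.symm] with v hv
    exact (hasDerivAt_twistorCoord_left p q ht hv.symm).deriv
  have hnum : HasDerivAt (fun v => (p + q * v) * (a * √(v ^ 2 + α) + t * v + α))
      (q * 1 * (a * √(s ^ 2 + α) + t * s + α)
        + (p + q * s) * (a * (s / √(s ^ 2 + α)) + t * 1)) s :=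
    (((hasDerivAt_id s).const_mul q).const_add p).mul
      ((((hasDerivAt_sqrt_sq_add hs).const_mul a).add ((hasDerivAt_id s).const_mul t)).add_const α)
  have hden : HasDerivAt (fun v => a * (v - t) ^ 2) (a * (2 * (s - t) ^ 1 * 1)) s := by
    simpa using (((hasDerivAt_id s).sub_const t).pow 2).const_mul a
  have ha : 0 < a := sqrt_pos.2 ht
  refine ((hnum.div hden (by positivity)).congr_of_eventuallyEq heq).congr_deriv ?_
  rw [twistorCoord]
  field_simp
  linear_combination (p + q * s) * sqrt_sub_sqrt_mul_eq ht.le hs.le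

theorem hasDerivAt_twistorPotential_right (ht : 0 ≤ t ^ 2 + α) (hs : 0 < s ^ 2 + α) (hts : t ≠ s)
    (hN : √(t ^ 2 + α) * √(s ^ 2 + α) + t * s + α ≠ 0) :
    HasDerivAt (fun v => twistorPotential α t v) (√(t ^ 2 + α) / (√(s ^ 2 + α) * (t - s))) s := by
  rw [← funext (twistorPotential_comm α t)]
  exact hasDerivAt_twistorPotential_left hs ht hts.symm (by rwa [mul_comm, mul_comm s])

theorem hasDerivAt_twistorCoord_right (p q : ℝ) (hs : 0 < s ^ 2 + α) (hts : t ≠ s) :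
    HasDerivAt (fun v => twistorCoord α p q t v)
      (-((p + q * t) * (√(s ^ 2 + α) * √(t ^ 2 + α) + s * t + α)
        / (√(s ^ 2 + α) * (t - s) ^ 2))) s := by
  rw [funext fun v => twistorCoord_swap α p q v t]
  exact (hasDerivAt_twistorCoord_left p q hs hts.symm).neg

theorem twistorCoord_compatible (p q : ℝ) {ξ η : ℝ} (hξ : 0 < ξ ^ 2 + α) (hη : 0 < η ^ 2 + α)
    (hξη : ξ ≠ η) (hN : √(ξ ^ 2 + α) * √(η ^ 2 + α) + ξ * η + α ≠ 0) :
    deriv (fun s => deriv (fun t => twistorCoord α p q t s) ξ) η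
      = deriv (fun t => twistorPotential α t η) ξ * deriv (fun s => twistorCoord α p q ξ s) η
        + deriv (fun s => twistorPotential α ξ s) η * deriv (fun t => twistorCoord α p q t η) ξ := by
  rw [(hasDerivAt_deriv_twistorCoord_left p q hξ hη hξη).deriv,
    (hasDerivAt_twistorPotential_left hξ hη.le hξη hN).deriv,
    (hasDerivAt_twistorCoord_right p q hη hξη).deriv,
    (hasDerivAt_twistorPotential_right hξ.le hη hξη hN).deriv,
    (hasDerivAt_twistorCoord_left p q hξ hξη).deriv, twistorCoord]
  have ha : 0 < √(ξ ^ 2 + α) := sqrt_pos.2 hξ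
  have hb : 0 < √(η ^ 2 + α) := sqrt_pos.2 hη
  field_simp
  ring

end

/-- the general one-parameter family (with `R(z) = z² + α`)
`x = (√R(ξ) + √R(η))/(η − ξ)`, `y = (η√R(ξ) + ξ√R(η))/(η − ξ)`,
`μ = log ((√R(ξ)√R(η) + ξη + α)/(η − ξ))` satisfies the twistor compatibility
system on its natural domain. -/
theorem stmt_7 (α : ℝ) (x y μ : ℝ → ℝ → ℝ)
    (hx : x = fun ξ η => (Real.sqrt (ξ ^ 2 + α) + Real.sqrt (η ^ 2 + α)) / (η - ξ))
    (hy : y = fun ξ η =>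
      (η * Real.sqrt (ξ ^ 2 + α) + ξ * Real.sqrt (η ^ 2 + α)) / (η - ξ))
    (hμ : μ = fun ξ η =>
      Real.log ((Real.sqrt (ξ ^ 2 + α) * Real.sqrt (η ^ 2 + α) + ξ * η + α) / (η - ξ))) :
    ∀ ξ η : ℝ, ξ < η → 0 < ξ ^ 2 + α → 0 < η ^ 2 + α →
      0 < Real.sqrt (ξ ^ 2 + α) * Real.sqrt (η ^ 2 + α) + ξ * η + α →
      (deriv (fun s => deriv (fun t => x t s) ξ) η
          = deriv (fun t => μ t η) ξ * deriv (fun s => x ξ s) η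
            + deriv (fun s => μ ξ s) η * deriv (fun t => x t η) ξ) ∧
      (deriv (fun s => deriv (fun t => y t s) ξ) η
          = deriv (fun t => μ t η) ξ * deriv (fun s => y ξ s) η
            + deriv (fun s => μ ξ s) η * deriv (fun t => y t η) ξ) := by
  intro ξ η hlt hξ hη hN
  obtain rfl : x = twistorCoord α 1 0 := by
    rw [hx]; funext t s; simp only [twistorCoord]; ring
  obtain rfl : y = twistorCoord α 0 1 := by
    rw [hy]; funext t s; simp only [twistorCoord]; ring
  obtain rfl : μ = twistorPotential α := hμ
  exact ⟨twistorCoord_compatible 1 0 hξ hη hlt.ne hN.ne',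
    twistorCoord_compatible 0 1 hξ hη hlt.ne hN.ne'⟩
end

section
/- Let α ∈ ℝ and ξ, η ∈ ℝ with ξ ≠ η, ξ² + α ≥ 0 and η² + α ≥ 0. Write s = √(ξ² + α) and u = √(η² + α). Then ((s·u + ξη + α)/(η − ξ))² = α·((s + u)/(η − ξ))² + ((η·s + ξ·u)/(η − ξ))² − α. In other words, with moment maps x = (s + u)/(η − ξ), y = (η·s + ξ·u)/(η − ξ) and square norm e^{2μ} = ((s·u + ξη + α)/(η − ξ))², one has e^{2μ} = α·x² + y² − α, a quadratic polynomial in the moment maps. -/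
/-!
With `s = √(ξ² + α)` and `u = √(η² + α)`, clearing the denominator `(η - ξ)²` turns the
identity into `(s u + ξ η + α)² = α (s + u)² + (η s + ξ u)² - α (η - ξ)²`. The `u²`-coefficients
of the two sides, `s²` and `α + ξ²`, agree, and once `s²` is replaced by `ξ² + α` the two sides
coincide as polynomials.
-/

theorem twistor_norm_numerator_sq {R : Type*} [CommRing R] {α ξ η s u : R}
    (hs : s ^ 2 = ξ ^ 2 + α) :
    (s * u + ξ * η + α) ^ 2 = α * (s + u) ^ 2 + (η * s + ξ * u) ^ 2 - α * (η - ξ) ^ 2 := by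
  linear_combination (u ^ 2 - α - η ^ 2) * hs

theorem div_sq_eq_of_sq_eq {K : Type*} [Field K] {α N A B D : K} (hD : D ≠ 0)
    (h : N ^ 2 = α * A ^ 2 + B ^ 2 - α * D ^ 2) :
    (N / D) ^ 2 = α * (A / D) ^ 2 + (B / D) ^ 2 - α := by
  field_simp
  linear_combination h

theorem stmt_8_general (α ξ η : ℝ) (hne : ξ ≠ η)
    (hξ : 0 ≤ ξ ^ 2 + α) :
    ((Real.sqrt (ξ ^ 2 + α) * Real.sqrt (η ^ 2 + α) + ξ * η + α) / (η - ξ)) ^ 2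
      = α * ((Real.sqrt (ξ ^ 2 + α) + Real.sqrt (η ^ 2 + α)) / (η - ξ)) ^ 2
        + ((η * Real.sqrt (ξ ^ 2 + α) + ξ * Real.sqrt (η ^ 2 + α)) / (η - ξ)) ^ 2
        - α :=
  div_sq_eq_of_sq_eq (sub_ne_zero.mpr hne.symm)
    (twistor_norm_numerator_sq (Real.sq_sqrt hξ))

/-- for the general family with `R(z) = z² + α`, the square norm of
the twistor 2-form is quadratic in the moment maps: `e^{2μ} = α·x² + y² − α`. -/
theorem stmt_8 (α ξ η : ℝ) (hne : ξ ≠ η)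
    (hξ : 0 ≤ ξ ^ 2 + α) (hη : 0 ≤ η ^ 2 + α) :
    ((Real.sqrt (ξ ^ 2 + α) * Real.sqrt (η ^ 2 + α) + ξ * η + α) / (η - ξ)) ^ 2
      = α * ((Real.sqrt (ξ ^ 2 + α) + Real.sqrt (η ^ 2 + α)) / (η - ξ)) ^ 2
        + ((η * Real.sqrt (ξ ^ 2 + α) + ξ * Real.sqrt (η ^ 2 + α)) / (η - ξ)) ^ 2
        - α :=
  stmt_8_general α ξ η hne hξ
end

section
/- Let α ∈ ℝ and ε ∈ {−1, 1}. Define c₂ : ℝ → ℝ by c₂(ξ) = √(ξ² + α) and c₄ : ℝ → ℝ by c₄(η) = ε·√(η² + α). Then for all ξ, η with ξ² + α > 0 and η² + α > 0, the ambitoric compatibility constraint holds: c₂''(ξ)·((ξ − η)·c₄'(η) + c₄(η) − c₂(ξ))³ + c₄''(η)·((ξ − η)·c₂'(ξ) + c₄(η) − c₂(ξ))³ = 0. -/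
/-!
With `S = √(ξ² + α)` and `T = √(η² + α)` one has `c₂' = ξ / S`, `c₂'' = α / S³` and likewise
`c₄' = ε η / T`, `c₄'' = ε α / T³`. Both cubed brackets are multiples of the same quantity
`K = ε (ξ η + α) - S T`, namely `K / T` and `-ε K / S`, so the constraint reduces to
`α K³ (1 - ε⁴) / (S³ T³) = 0`, which holds since `ε² = 1`.
-/

open Filter Topology

namespace Real

theorem hasDerivAt_sqrt_sq_add {α x : ℝ} (h : 0 < x ^ 2 + α) :
    HasDerivAt (fun y => √(y ^ 2 + α)) (x / √(x ^ 2 + α)) x := by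
  have hsq : HasDerivAt (fun y : ℝ => y ^ 2 + α) (2 * x) x := by
    simpa using (hasDerivAt_pow 2 x).add_const α
  convert hsq.sqrt h.ne' using 1
  field_simp

theorem deriv_sqrt_sq_add {α x : ℝ} (h : 0 < x ^ 2 + α) :
    deriv (fun y => √(y ^ 2 + α)) x = x / √(x ^ 2 + α) :=
  (hasDerivAt_sqrt_sq_add h).deriv

theorem deriv_deriv_sqrt_sq_add {α x : ℝ} (h : 0 < x ^ 2 + α) :
    deriv (deriv fun y => √(y ^ 2 + α)) x = α / √(x ^ 2 + α) ^ 3 := by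
  have hpos : ∀ᶠ y in 𝓝 x, 0 < y ^ 2 + α :=
    (isOpen_lt continuous_const (by fun_prop)).mem_nhds h
  have hderiv : deriv (fun y => √(y ^ 2 + α)) =ᶠ[𝓝 x] fun y => y / √(y ^ 2 + α) :=
    hpos.mono fun y hy => deriv_sqrt_sq_add hy
  rw [hderiv.deriv_eq]
  have hS : √(x ^ 2 + α) ≠ 0 := by positivity
  have hquot : HasDerivAt (fun y => y / √(y ^ 2 + α))
      ((1 * √(x ^ 2 + α) - x * (x / √(x ^ 2 + α))) / √(x ^ 2 + α) ^ 2) x :=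
    (hasDerivAt_id' x).div (hasDerivAt_sqrt_sq_add h) hS
  rw [hquot.deriv]
  field_simp
  rw [Real.sq_sqrt h.le]
  ring

end Real

theorem ambitoric_constraint_of_sq_eq {α ε ξ η S T : ℝ} (hε : ε ^ 2 = 1) (hS₀ : S ≠ 0)
    (hT₀ : T ≠ 0) (hS : S ^ 2 = ξ ^ 2 + α) (hT : T ^ 2 = η ^ 2 + α) :
    α / S ^ 3 * ((ξ - η) * (ε * (η / T)) + ε * T - S) ^ 3
      + ε * (α / T ^ 3) * ((ξ - η) * (ξ / S) + ε * T - S) ^ 3 = 0 := by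
  set K := ε * (ξ * η + α) - S * T
  have h₄ : (ξ - η) * (ε * (η / T)) + ε * T - S = K / T := by
    field_simp
    linear_combination ε * hT
  have h₂ : (ξ - η) * (ξ / S) + ε * T - S = -(ε * K) / S := by
    field_simp
    linear_combination -hS + (ξ * η + α) * hε
  rw [h₄, h₂]
  field_simp
  linear_combination -(α * K ^ 3) * (ε ^ 2 + 1) * hε

/-- the pair `c₂(ξ) = √(ξ² + α)`, `c₄(η) = ε·√(η² + α)` (with
`ε = ±1`) satisfies the ambitoric compatibility constraint wherever
`ξ² + α > 0` and `η² + α > 0`. -/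
theorem stmt_11 (α ε : ℝ) (hε : ε ∈ ({-1, 1} : Set ℝ)) (c₂ c₄ : ℝ → ℝ)
    (hc₂ : c₂ = fun ξ => Real.sqrt (ξ ^ 2 + α))
    (hc₄ : c₄ = fun η => ε * Real.sqrt (η ^ 2 + α)) :
    ∀ ξ η : ℝ, 0 < ξ ^ 2 + α → 0 < η ^ 2 + α →
      deriv (deriv c₂) ξ * ((ξ - η) * deriv c₄ η + c₄ η - c₂ ξ) ^ 3
        + deriv (deriv c₄) η * ((ξ - η) * deriv c₂ ξ + c₄ η - c₂ ξ) ^ 3 = 0 := by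
  intro ξ η hξ hη
  subst hc₂ hc₄
  have hε₂ : ε ^ 2 = 1 := by rcases hε with rfl | rfl <;> norm_num
  simp only [deriv_const_mul_field', Real.deriv_sqrt_sq_add hξ, Real.deriv_sqrt_sq_add hη,
    Real.deriv_deriv_sqrt_sq_add hξ, Real.deriv_deriv_sqrt_sq_add hη]
  exact ambitoric_constraint_of_sq_eq hε₂ (by positivity) (by positivity)
    (Real.sq_sqrt hξ.le) (Real.sq_sqrt hη.le)
end

section
/- Define p : ℝ \ {1} → ℝ by p(z) = z·(2z − 1)/(1 − z). Then for every z ≠ 1, the first-order ODE (p'(z)·p(z) + 3·p(z) + 2z)·z³ − (p(z) + z)³ = 0 holds. -/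
theorem hasDerivAt_mul_two_mul_sub_one_div_one_sub {z : ℝ} (hz : z ≠ 1) :
    HasDerivAt (fun z : ℝ => z * (2 * z - 1) / (1 - z))
      ((-2 * z ^ 2 + 4 * z - 1) / (1 - z) ^ 2) z := by
  have hnum : HasDerivAt (fun z : ℝ => z * (2 * z - 1)) (4 * z - 1) z :=
    ((hasDerivAt_id' z).fun_mul (((hasDerivAt_id' z).const_mul 2).sub_const 1)).congr_deriv
      (by ring)
  exact (hnum.fun_div ((hasDerivAt_id' z).const_sub 1) (sub_ne_zero.mpr hz.symm)).congr_deriv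
    (by ring)

/-- `p(z) = z(2z − 1)/(1 − z)` solves the reduced first-order ODE
`(p'p + 3p + 2z)·z³ − (p + z)³ = 0` on `ℝ \ {1}`. -/
theorem stmt_15 (p : ℝ → ℝ) (hp : p = fun z => z * (2 * z - 1) / (1 - z)) :
    ∀ z : ℝ, z ≠ 1 →
      (deriv p z * p z + 3 * p z + 2 * z) * z ^ 3 - (p z + z) ^ 3 = 0 := by
  intro z hz
  subst hp
  rw [(hasDerivAt_mul_two_mul_sub_one_div_one_sub hz).deriv]
  field_simp
  ring
end

section
/- Let c ∈ ℝ and define p : ℝ → ℝ by p(z) = (z/2)·(c²z² − 1)/(c²z² + 1). Then for every z ∈ ℝ, the first-order ODE 4·p(z)·p'(z) − z + c²·(z − 2·p(z))³ = 0 holds. (Note the denominator c²z² + 1 is always positive, so p is defined and differentiable on all of ℝ.) -/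
/-!
With `u = c²z²` one has `z − 2p = 2z/(u + 1)` and `p' = (u² + 4u − 1)/(2(u + 1)²)`, so after
clearing the denominator `(u + 1)³` the equation becomes the polynomial identity
`(u − 1)(u² + 4u − 1) + 8u = (u + 1)³`.
-/

theorem hasDerivAt_half_mul_sq_sub_one_div_sq_add_one (c z : ℝ) :
    HasDerivAt (fun z : ℝ => z / 2 * ((c ^ 2 * z ^ 2 - 1) / (c ^ 2 * z ^ 2 + 1)))
      (((c ^ 2 * z ^ 2) ^ 2 + 4 * (c ^ 2 * z ^ 2) - 1) / (2 * (c ^ 2 * z ^ 2 + 1) ^ 2)) z := by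
  have hden : c ^ 2 * z ^ 2 + 1 ≠ 0 := by positivity
  have hsq : HasDerivAt (fun z : ℝ => c ^ 2 * z ^ 2) (c ^ 2 * (2 * z)) z := by
    simpa using (hasDerivAt_pow 2 z).const_mul (c ^ 2)
  have hhalf : HasDerivAt (fun z : ℝ => z / 2) (1 / 2) z := (hasDerivAt_id z).div_const 2
  refine (hhalf.mul ((hsq.sub_const 1).div (hsq.add_const 1) hden)).congr_deriv ?_
  simp only [Pi.div_apply]
  field_simp
  ring

/-- `p(z) = (z/2)·(c²z² − 1)/(c²z² + 1)` solves the reduced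
first-order ODE `4pp' − z + c²(z − 2p)³ = 0` on all of `ℝ`. -/
theorem stmt_16 (c : ℝ) (p : ℝ → ℝ)
    (hp : p = fun z => z / 2 * ((c ^ 2 * z ^ 2 - 1) / (c ^ 2 * z ^ 2 + 1))) :
    ∀ z : ℝ,
      4 * p z * deriv p z - z + c ^ 2 * (z - 2 * p z) ^ 3 = 0 := by
  subst hp
  intro z
  have hden : c ^ 2 * z ^ 2 + 1 ≠ 0 := by positivity
  rw [(hasDerivAt_half_mul_sq_sub_one_div_sq_add_one c z).deriv]
  field_simp
  ring
end

section
/- Let c ∈ ℝ with c ≠ 0 and b ∈ ℝ. Define f(ξ) = √(ξ·(1 + b·ξ))/c on the domain {ξ ∈ ℝ : ξ·(1 + b·ξ) > 0}. Then at every point of this domain, f''(ξ)·ξ³ − 2c²·(ξ·f'(ξ) − f(ξ))³ = 0. -/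
private lemma aux_g (b x : ℝ) : HasDerivAt (fun ξ : ℝ => ξ * (1 + b * ξ)) (1 + 2 * b * x) x := by
  have h := (hasDerivAt_id x).mul (((hasDerivAt_const x b).mul (hasDerivAt_id x)).const_add 1)
  refine h.congr_deriv ?_
  simp [id]; ring

private lemma aux_d1 (c b x : ℝ) (hx : 0 < x * (1 + b * x)) :
    HasDerivAt (fun ξ => Real.sqrt (ξ * (1 + b * ξ)) / c)
      ((1 + 2 * b * x) / (2 * Real.sqrt (x * (1 + b * x)) * c)) x := by
  have hs : 0 < Real.sqrt (x * (1 + b * x)) := Real.sqrt_pos.2 hx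
  have hsq := (Real.hasDerivAt_sqrt (ne_of_gt hx)).comp x (aux_g b x)
  refine (hsq.div_const c).congr_deriv ?_
  field_simp

/-- `f(ξ) = √(ξ(1 + bξ))/c` solves the ODE
`f''·ξ³ − 2c²·(ξf' − f)³ = 0` on the domain `{ξ : ξ(1 + bξ) > 0}`. -/
theorem stmt_17 (c b : ℝ) (hc : c ≠ 0) (f : ℝ → ℝ)
    (hf : f = fun ξ => Real.sqrt (ξ * (1 + b * ξ)) / c) :
    ∀ ξ : ℝ, 0 < ξ * (1 + b * ξ) →
      deriv (deriv f) ξ * ξ ^ 3 - 2 * c ^ 2 * (ξ * deriv f ξ - f ξ) ^ 3 = 0 := by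
  subst hf
  intro x hx
  set s := Real.sqrt (x * (1 + b * x)) with hsdef
  have hs : 0 < s := Real.sqrt_pos.2 hx
  have hs2 : s ^ 2 = x * (1 + b * x) := Real.sq_sqrt hx.le
  have hU : IsOpen {y : ℝ | 0 < y * (1 + b * y)} := by
    have hcont : Continuous fun y : ℝ => y * (1 + b * y) := by continuity
    exact isOpen_lt continuous_const hcont
  have hd1 : ∀ y ∈ {y : ℝ | 0 < y * (1 + b * y)},
      deriv (fun ξ => Real.sqrt (ξ * (1 + b * ξ)) / c) y
        = (1 + 2 * b * y) / (2 * Real.sqrt (y * (1 + b * y)) * c) :=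
    fun y hy => (aux_d1 c b y hy).deriv
  have hev : deriv (fun ξ => Real.sqrt (ξ * (1 + b * ξ)) / c)
      =ᶠ[nhds x] fun y => (1 + 2 * b * y) / (2 * Real.sqrt (y * (1 + b * y)) * c) :=
    Filter.eventuallyEq_of_mem (hU.mem_nhds hx) hd1
  have hD : HasDerivAt (fun y : ℝ => 2 * Real.sqrt (y * (1 + b * y)) * c)
      (2 * ((1 + 2 * b * x) / (2 * s)) * c) x := by
    have hsq := (Real.hasDerivAt_sqrt (ne_of_gt hx)).comp x (aux_g b x)
    have h2 := (hsq.const_mul 2).mul_const c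
    refine h2.congr_deriv ?_
    rw [← hsdef]
    field_simp
  have hN : HasDerivAt (fun y : ℝ => 1 + 2 * b * y) (2 * b) x := by
    have h := ((hasDerivAt_id x).const_mul (2 * b)).const_add 1
    refine h.congr_deriv ?_; ring
  have hD0 : 2 * s * c ≠ 0 := by
    exact mul_ne_zero (mul_ne_zero two_ne_zero hs.ne') hc
  have hd2 : HasDerivAt (fun y => (1 + 2 * b * y) / (2 * Real.sqrt (y * (1 + b * y)) * c))
      ((2 * b * (2 * s * c) - (1 + 2 * b * x) * (2 * ((1 + 2 * b * x) / (2 * s)) * c))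
        / (2 * s * c) ^ 2) x := hN.div hD hD0
  have h2nd : deriv (deriv (fun ξ => Real.sqrt (ξ * (1 + b * ξ)) / c)) x
      = (2 * b * (2 * s * c) - (1 + 2 * b * x) * (2 * ((1 + 2 * b * x) / (2 * s)) * c))
        / (2 * s * c) ^ 2 := by
    rw [hev.deriv_eq]
    exact hd2.deriv
  have h1st : deriv (fun ξ => Real.sqrt (ξ * (1 + b * ξ)) / c) x
      = (1 + 2 * b * x) / (2 * s * c) := (aux_d1 c b x hx).deriv
  rw [h2nd, h1st]
  show _ - 2 * c ^ 2 * (x * _ - s / c) ^ 3 = 0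
  have hsne : s ≠ 0 := hs.ne'
  field_simp
  linear_combination (4*b*x^3 + 2*((x*(1+2*b*x) - 2*(x*(1+b*x)))^2 + (x*(1+2*b*x) - 2*s^2)*(x*(1+2*b*x) - 2*(x*(1+b*x))) + (x*(1+2*b*x) - 2*s^2)^2)) * hs2
end

section
/- Let β ∈ ℝ with β ≠ 0 and let ε ∈ {−1, 1}. Define f : ℝ → ℝ by f(ξ) = β·(ε·√(ξ² + β²) − β). Then for every ξ ∈ ℝ, f''(ξ)·f(ξ)³ + (f(ξ) − ξ·f'(ξ))³ = 0. -/
/-!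
Write `s = √(ξ² + β²)`. Then `f' = βεξ/s` and `f'' = βεβ²/s³`, while `s² − ξ² = β²` collapses
`f − ξf'` to `β²(εβ − s)/s`. Both terms of the ODE are then `β⁶/s³` times `±(s − εβ)³`,
the signs being opposite exactly because `ε² = 1`.
-/

open Real

section SqrtSqAddSq

variable {c : ℝ}

theorem sq_add_sq_pos_of_ne_zero (hc : c ≠ 0) (x : ℝ) : 0 < x ^ 2 + c ^ 2 := by
  positivity

theorem hasDerivAt_sqrt_sq_add_sq (hc : c ≠ 0) (x : ℝ) :
    HasDerivAt (fun t => √(t ^ 2 + c ^ 2)) (x / √(x ^ 2 + c ^ 2)) x := by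
  have hsq : HasDerivAt (fun t : ℝ => t ^ 2 + c ^ 2) (2 * x) x := by
    simpa using (hasDerivAt_pow 2 x).add_const (c ^ 2)
  refine ((hasDerivAt_sqrt (sq_add_sq_pos_of_ne_zero hc x).ne').comp x hsq).congr_deriv ?_
  field_simp

theorem hasDerivAt_div_sqrt_sq_add_sq (hc : c ≠ 0) (x : ℝ) :
    HasDerivAt (fun t => t / √(t ^ 2 + c ^ 2)) (c ^ 2 / √(x ^ 2 + c ^ 2) ^ 3) x := by
  have hpos := sq_add_sq_pos_of_ne_zero hc x
  have hs : √(x ^ 2 + c ^ 2) ≠ 0 := (sqrt_pos.mpr hpos).ne'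
  refine ((hasDerivAt_id' x).div (hasDerivAt_sqrt_sq_add_sq hc x) hs).congr_deriv ?_
  field_simp
  rw [sq_sqrt hpos.le]
  ring

end SqrtSqAddSq

theorem ode_residual_eq_zero_of_sq_eq_sq_add_sq {β ε ξ s : ℝ} (hε : ε ^ 2 = 1) (hs0 : s ≠ 0)
    (hs : s ^ 2 = ξ ^ 2 + β ^ 2) :
    β * (ε * (β ^ 2 / s ^ 3)) * (β * (ε * s - β)) ^ 3
      + (β * (ε * s - β) - ξ * (β * (ε * (ξ / s)))) ^ 3 = 0 := by
  have hcombo : β * (ε * s - β) - ξ * (β * (ε * (ξ / s))) = β ^ 2 * (ε * β - s) / s := by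
    field_simp
    linear_combination ε * β * hs
  rw [hcombo]
  field_simp
  linear_combination β ^ 6 * ((ε ^ 2 + 1) * s ^ 3 - 3 * ε * s ^ 2 * β + ε * β ^ 3) * hε

/-- the two-branch family `f(ξ) = β(ε√(ξ² + β²) − β)`, `ε = ±1`,
`β ≠ 0`, solves the ODE `f''·f³ + (f − ξf')³ = 0` on all of `ℝ`. -/
theorem stmt_18 (β ε : ℝ) (hβ : β ≠ 0) (hε : ε ∈ ({-1, 1} : Set ℝ))
    (f : ℝ → ℝ)
    (hf : f = fun ξ => β * (ε * Real.sqrt (ξ ^ 2 + β ^ 2) - β)) :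
    ∀ ξ : ℝ,
      deriv (deriv f) ξ * f ξ ^ 3 + (f ξ - ξ * deriv f ξ) ^ 3 = 0 := by
  have hε2 : ε ^ 2 = 1 := by
    rcases hε with rfl | rfl <;> norm_num
  have hf' : deriv f = fun ξ => β * (ε * (ξ / √(ξ ^ 2 + β ^ 2))) := by
    funext ξ
    rw [hf]
    exact ((((hasDerivAt_sqrt_sq_add_sq hβ ξ).const_mul ε).sub_const β).const_mul β).deriv
  intro ξ
  have hf'' : deriv (deriv f) ξ = β * (ε * (β ^ 2 / √(ξ ^ 2 + β ^ 2) ^ 3)) := by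
    rw [hf']
    exact (((hasDerivAt_div_sqrt_sq_add_sq hβ ξ).const_mul ε).const_mul β).deriv
  have hpos := sq_add_sq_pos_of_ne_zero hβ ξ
  rw [hf'', hf', hf]
  exact ode_residual_eq_zero_of_sq_eq_sq_add_sq hε2 (sqrt_pos.mpr hpos).ne' (sq_sqrt hpos.le)
end
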